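/- Let G be a finite connected graph on n ≥ 2 vertices. The expected absorption time of the neutral Moran process (r = 1) on G is at most n⁴·(φ(G)² − φ'₀), where φ(G) = ∑_{x∈V} 1/deg(x) and φ'₀ = (1/n)∑_{x∈V} (deg x)^{-2}. In particular it is at most φ(G)²·n⁴ ≤ n⁶. -/

import Mathlib

open Finset

/-- Total fitness of the population when the mutant set is `S`:
`W(S) = r·|S| + (n - |S|) = n + (r-1)·|S|`. -/
noncomputable def moranW {V : Type*} [Fintype V] (r : ℝ) (S : Finset V) : ℝ :=
  r * S.card + ((Fintype.card V : ℝ) - S.card)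

/-- One-step transition probability of the Moran process on the graph `G` with mutant
fitness `r`: an individual `x` is chosen with probability proportional to its fitness
(`r` if `x ∈ S`, else `1`), and it reproduces onto a uniformly random neighbour `y`,
which becomes a mutant if `x` is a mutant and a non-mutant otherwise. -/
noncomputable def moranP {V : Type*} [Fintype V] [DecidableEq V] (G : SimpleGraph V)
    [DecidableRel G.Adj] (r : ℝ) (S T : Finset V) : ℝ :=
  ∑ x : V, ∑ y ∈ G.neighborFinset x,
    (if x ∈ S then r else 1) / (moranW r S * G.degree x) *
      (if (if x ∈ S then insert y S else S.erase y) = T then 1 else 0)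

/-- The potential function `φ(X) = ∑_{x ∈ X} 1/deg x`. -/
noncomputable def moranPhi {V : Type*} [Fintype V] (G : SimpleGraph V) [DecidableRel G.Adj]
    (X : Finset V) : ℝ :=
  ∑ x ∈ X, (1 : ℝ) / G.degree x

/-!
Let `n = |V|` and `ψ(S) = n⁴ φ(S) (φ(V) - φ(S))`. In the neutral process the transfer `x → y`
has probability `1 / (n deg x)` and changes `φ` by `±1 / deg y`, the reverse transfer undoing
it, so `φ(X_t)` is a martingale. From a proper state a boundary transfer has probability at
least `1/n²` and moves `φ` by at least `1/n`, so a step has conditional variance at least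
`1/n⁴`. As `ψ` is `n⁴` times a concave quadratic in `φ`, it drops by at least `1` in expectation
per step; it vanishes at the absorbing states, so the maximum principle gives `h ≤ ψ`, and
averaging `ψ({x})` over `x` gives the bound.
-/
namespace SimpleGraph

variable {V : Type*}

lemma Preconnected.exists_adj_mem_not_mem {G : SimpleGraph V} (hG : G.Preconnected) {s : Set V}
    {a b : V} (ha : a ∈ s) (hb : b ∉ s) : ∃ x ∈ s, ∃ y ∉ s, G.Adj x y := by
  obtain ⟨p⟩ := hG a b
  obtain ⟨d, -, hd₁, hd₂⟩ := p.exists_boundary_dart s ha hb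
  exact ⟨d.fst, hd₁, d.snd, hd₂, d.adj⟩

lemma sum_sum_neighborFinset_eq_zero_of_antisymm {M : Type*} [AddCommGroup M]
    (G : SimpleGraph V) [Fintype V] [DecidableRel G.Adj] (f : V → V → M)
    (hf : ∀ x y, G.Adj x y → f y x = -f x y) :
    ∑ x, ∑ y ∈ G.neighborFinset x, f x y = 0 := by
  rw [Finset.sum_sigma']
  refine Finset.sum_involution (fun p _ => ⟨p.2, p.1⟩) (fun p hp => ?_) (fun p hp _ => ?_)
    (fun p hp => ?_) (fun p _ => rfl)
  all_goals
    simp only [Finset.mem_sigma, mem_neighborFinset, Finset.mem_univ, true_and] at hp ⊢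
  · rw [hf _ _ hp, add_neg_cancel]
  · exact fun h => hp.ne (congrArg Sigma.fst h).symm
  · exact hp.symm

end SimpleGraph

lemma eq_of_forall_le_of_le_sum_mul {ι : Type*} [Fintype ι] {p g : ι → ℝ} {M : ℝ}
    (hp : ∀ i, 0 ≤ p i) (hp1 : ∑ i, p i = 1) (hg : ∀ i, g i ≤ M) (hM : M ≤ ∑ i, p i * g i)
    {j : ι} (hj : 0 < p j) : g j = M := by
  have hgap : ∑ i, p i * (M - g i) = 0 := by
    have : ∑ i, p i * (M - g i) = M - ∑ i, p i * g i := by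
      simp only [mul_sub, Finset.sum_sub_distrib, ← Finset.sum_mul, hp1, one_mul]
    have hnonneg : 0 ≤ ∑ i, p i * (M - g i) :=
      Finset.sum_nonneg fun i _ => mul_nonneg (hp i) (sub_nonneg.mpr (hg i))
    linarith
  have hj0 := (Finset.sum_eq_zero_iff_of_nonneg fun i _ =>
    mul_nonneg (hp i) (sub_nonneg.mpr (hg i))).mp hgap j (Finset.mem_univ j)
  linarith [(mul_eq_zero.mp hj0).resolve_left hj.ne']

def moranStep {V : Type*} [DecidableEq V] (S : Finset V) (x y : V) : Finset V :=
  if x ∈ S then insert y S else S.erase y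

noncomputable def moranPsi {V : Type*} [Fintype V] (G : SimpleGraph V) [DecidableRel G.Adj]
    (S : Finset V) : ℝ :=
  (Fintype.card V : ℝ) ^ 4 * (moranPhi G S * (moranPhi G Finset.univ - moranPhi G S))

section Potential

variable {V : Type*} [Fintype V] (G : SimpleGraph V) [DecidableRel G.Adj]

lemma moranPhi_nonneg (X : Finset V) : 0 ≤ moranPhi G X :=
  Finset.sum_nonneg fun _ _ => by positivity

lemma moranPhi_univ_le_card : moranPhi G Finset.univ ≤ Fintype.card V := by
  calc moranPhi G Finset.univ = ∑ x : V, ((G.degree x : ℝ))⁻¹ := by simp [moranPhi]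
    _ ≤ ∑ _x : V, 1 := Finset.sum_le_sum fun x _ => Nat.cast_inv_le_one (G.degree x)
    _ = Fintype.card V := by simp

lemma sum_moranPsi_singleton :
    ∑ x, moranPsi G {x} = (Fintype.card V : ℝ) ^ 4 *
      (moranPhi G Finset.univ ^ 2 - ∑ x : V, ((G.degree x : ℝ))⁻¹ ^ 2) := by
  have hphi : moranPhi G Finset.univ = ∑ x : V, ((G.degree x : ℝ))⁻¹ := by simp [moranPhi]
  have hsingle (x : V) : moranPsi G {x} = (Fintype.card V : ℝ) ^ 4 *
      (((G.degree x : ℝ))⁻¹ * moranPhi G Finset.univ - ((G.degree x : ℝ))⁻¹ ^ 2) := by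
    simp only [moranPsi, moranPhi, Finset.sum_singleton, one_div]
    ring
  simp only [hsingle, ← Finset.mul_sum, Finset.sum_sub_distrib, ← Finset.sum_mul, ← hphi, sq]

end Potential

section Moran

variable {V : Type*} [Fintype V] [DecidableEq V] (G : SimpleGraph V) [DecidableRel G.Adj]

lemma moranPhi_moranStep_sub (S : Finset V) (x y : V) :
    moranPhi G (moranStep S x y) - moranPhi G S =
      ((if x ∈ S then 1 else 0) - (if y ∈ S then 1 else 0)) / G.degree y := by
  unfold moranStep moranPhi
  by_cases hx : x ∈ S <;> by_cases hy : y ∈ S <;> simp only [hx, hy, if_true, if_false]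
  · simp [Finset.insert_eq_self.mpr hy]
  · rw [Finset.sum_insert hy]; ring
  · rw [Finset.sum_erase_eq_sub hy]; ring
  · simp [Finset.erase_eq_of_notMem hy]

lemma moranP_nonneg {r : ℝ} (hr : 0 ≤ r) (S T : Finset V) : 0 ≤ moranP G r S T := by
  have hW : 0 ≤ moranW r S := by
    have : (S.card : ℝ) ≤ Fintype.card V := by exact_mod_cast S.card_le_univ
    unfold moranW
    positivity
  unfold moranP
  refine Finset.sum_nonneg fun x _ => Finset.sum_nonneg fun y _ => ?_
  split_ifs <;> positivity

lemma sum_moranP_one_mul (S : Finset V) (F : Finset V → ℝ) :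
    ∑ T, moranP G 1 S T * F T =
      ∑ x, ∑ y ∈ G.neighborFinset x, F (moranStep S x y) / (Fintype.card V * G.degree x) := by
  have hW : moranW (1 : ℝ) S = Fintype.card V := by simp [moranW]
  simp only [moranP, hW, ite_self, Finset.sum_mul]
  rw [Finset.sum_comm]
  refine Finset.sum_congr rfl fun x _ => ?_
  rw [Finset.sum_comm]
  refine Finset.sum_congr rfl fun y _ => ?_
  simp [moranStep, div_eq_inv_mul]

lemma sum_moranP_one [Nonempty V] (hdeg : ∀ x, 0 < G.degree x) (S : Finset V) :
    ∑ T, moranP G 1 S T = 1 := by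
  have hrow (x : V) :
      ∑ _y ∈ G.neighborFinset x, 1 / ((Fintype.card V : ℝ) * G.degree x) =
        1 / Fintype.card V := by
    have : (G.degree x : ℝ) ≠ 0 := by exact_mod_cast (hdeg x).ne'
    rw [Finset.sum_const, G.card_neighborFinset_eq_degree, nsmul_eq_mul]
    field_simp
  have := sum_moranP_one_mul G S 1
  simp only [Pi.one_apply, mul_one, hrow, Finset.sum_const, Finset.card_univ, nsmul_eq_mul] at this
  rw [this, mul_one_div_cancel (by positivity)]

lemma sum_moranP_one_mul_moranPhi_sub (S : Finset V) :
    ∑ T, moranP G 1 S T * (moranPhi G T - moranPhi G S) = 0 := by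
  rw [sum_moranP_one_mul G S (fun T => moranPhi G T - moranPhi G S)]
  refine G.sum_sum_neighborFinset_eq_zero_of_antisymm _ fun x y _ => ?_
  simp only [moranPhi_moranStep_sub]
  ring

lemma inv_card_sq_le_moranP_one_insert {S : Finset V} {x y : V} (hx : x ∈ S)
    (hxy : G.Adj x y) :
    1 / (Fintype.card V : ℝ) ^ 2 ≤ moranP G 1 S (insert y S) := by
  have hdeg : (0 : ℝ) < G.degree x := by exact_mod_cast hxy.degree_pos_left
  have hdeg_le : (G.degree x : ℝ) ≤ Fintype.card V := by
    exact_mod_cast (G.degree_lt_card_verts x).le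
  have hn : (0 : ℝ) < Fintype.card V := hdeg.trans_le hdeg_le
  set w : V → V → ℝ := fun a b =>
    (if moranStep S a b = insert y S then 1 else 0) / (Fintype.card V * G.degree a)
  have hw (a b : V) : 0 ≤ w a b := by
    simp only [w]
    split_ifs <;> positivity
  have hP : moranP G 1 S (insert y S) = ∑ a, ∑ b ∈ G.neighborFinset a, w a b := by
    simpa [mul_ite] using sum_moranP_one_mul G S (fun T => if T = insert y S then 1 else 0)
  calc 1 / (Fintype.card V : ℝ) ^ 2 ≤ 1 / (Fintype.card V * G.degree x) := by
        rw [sq]; gcongr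
    _ = w x y := by simp [w, moranStep, hx]
    _ ≤ ∑ b ∈ G.neighborFinset x, w x b :=
        Finset.single_le_sum (fun b _ => hw x b) ((G.mem_neighborFinset x y).mpr hxy)
    _ ≤ ∑ a, ∑ b ∈ G.neighborFinset a, w a b :=
        Finset.single_le_sum (f := fun a => ∑ b ∈ G.neighborFinset a, w a b)
          (fun a _ => Finset.sum_nonneg fun b _ => hw a b) (Finset.mem_univ x)
    _ = moranP G 1 S (insert y S) := hP.symm

lemma inv_card_pow_four_le_sum_moranP_one_mul_sq {S : Finset V} {x y : V} (hx : x ∈ S)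
    (hy : y ∉ S) (hxy : G.Adj x y) :
    1 / (Fintype.card V : ℝ) ^ 4 ≤
      ∑ T, moranP G 1 S T * (moranPhi G T - moranPhi G S) ^ 2 := by
  have hdeg : (0 : ℝ) < G.degree y := by exact_mod_cast hxy.degree_pos_right
  have hdeg_le : (G.degree y : ℝ) ≤ Fintype.card V := by
    exact_mod_cast (G.degree_lt_card_verts y).le
  have hjump : moranPhi G (insert y S) - moranPhi G S = 1 / G.degree y := by
    simpa [moranStep, hx, hy] using moranPhi_moranStep_sub G S x y
  calc 1 / (Fintype.card V : ℝ) ^ 4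
        = 1 / (Fintype.card V : ℝ) ^ 2 * (1 / Fintype.card V) ^ 2 := by ring
    _ ≤ moranP G 1 S (insert y S) * (moranPhi G (insert y S) - moranPhi G S) ^ 2 := by
        rw [hjump]
        exact mul_le_mul (inv_card_sq_le_moranP_one_insert G hx hxy) (by gcongr) (by positivity)
          (moranP_nonneg G zero_le_one S _)
    _ ≤ ∑ T, moranP G 1 S T * (moranPhi G T - moranPhi G S) ^ 2 :=
        Finset.single_le_sum (f := fun T => moranP G 1 S T * (moranPhi G T - moranPhi G S) ^ 2)
          (fun T _ => mul_nonneg (moranP_nonneg G zero_le_one S T) (sq_nonneg _))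
          (Finset.mem_univ _)

lemma one_add_sum_moranP_one_mul_moranPsi_le [Nonempty V] (hdeg : ∀ x, 0 < G.degree x)
    {S : Finset V} {x y : V} (hx : x ∈ S) (hy : y ∉ S) (hxy : G.Adj x y) :
    1 + ∑ T, moranP G 1 S T * moranPsi G T ≤ moranPsi G S := by
  have hn : (0 : ℝ) < Fintype.card V := by positivity
  have hexpand : ∑ T, moranP G 1 S T * moranPsi G T =
      moranPsi G S * ∑ T, moranP G 1 S T +
        (Fintype.card V : ℝ) ^ 4 * ((moranPhi G Finset.univ - 2 * moranPhi G S) *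
          ∑ T, moranP G 1 S T * (moranPhi G T - moranPhi G S)) -
        (Fintype.card V : ℝ) ^ 4 *
          ∑ T, moranP G 1 S T * (moranPhi G T - moranPhi G S) ^ 2 := by
    simp only [Finset.mul_sum, ← Finset.sum_add_distrib, ← Finset.sum_sub_distrib]
    refine Finset.sum_congr rfl fun T _ => ?_
    unfold moranPsi
    ring
  have hvar := inv_card_pow_four_le_sum_moranP_one_mul_sq G hx hy hxy
  rw [hexpand, sum_moranP_one G hdeg, sum_moranP_one_mul_moranPhi_sub, mul_zero, mul_zero,
    mul_one, add_zero]
  have : 1 ≤ (Fintype.card V : ℝ) ^ 4 *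
      ∑ T, moranP G 1 S T * (moranPhi G T - moranPhi G S) ^ 2 := by
    calc (1 : ℝ) = (Fintype.card V : ℝ) ^ 4 * (1 / (Fintype.card V : ℝ) ^ 4) := by field_simp
      _ ≤ _ := by gcongr
  linarith

lemma le_moranPsi [Nontrivial V] (hG : G.Preconnected) (h : Finset V → ℝ) (habs0 : h ∅ = 0)
    (habs1 : h Finset.univ = 0)
    (hrec : ∀ S : Finset V, S ≠ ∅ → S ≠ Finset.univ →
      h S = 1 + ∑ T : Finset V, moranP G 1 S T * h T)
    (S : Finset V) : h S ≤ moranPsi G S := by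
  have hdeg (v : V) : 0 < G.degree v := hG.degree_pos_of_nontrivial v
  set g : Finset V → ℝ := fun T => h T - moranPsi G T
  obtain ⟨S₀, -, hS₀⟩ := Finset.exists_max_image Finset.univ g Finset.univ_nonempty
  -- a maximiser of largest cardinality: at a proper state, `g` would stay maximal on a larger set
  obtain ⟨S₁, hS₁, hcard⟩ := Finset.exists_max_image ({T | g T = g S₀} : Finset (Finset V))
    Finset.card ⟨S₀, by simp⟩
  replace hS₁ : g S₁ = g S₀ := by simpa using hS₁
  have hmax (T : Finset V) : g T ≤ g S₁ := hS₁ ▸ hS₀ T (Finset.mem_univ T)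
  suffices g S₁ ≤ 0 by linarith [hmax S]
  by_cases h0 : S₁ = ∅
  · simp [g, h0, habs0, moranPsi, moranPhi]
  by_cases h1 : S₁ = Finset.univ
  · simp [g, h1, habs1, moranPsi]
  obtain ⟨a, ha⟩ := Finset.nonempty_iff_ne_empty.mpr h0
  obtain ⟨b, hb⟩ := not_forall.mp (mt Finset.eq_univ_iff_forall.mpr h1)
  obtain ⟨x, hx, y, hy, hxy⟩ :=
    hG.exists_adj_mem_not_mem (s := (S₁ : Set V)) (Finset.mem_coe.mpr ha) (by simpa using hb)
  rw [Finset.mem_coe] at hx hy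
  have hsub : g S₁ ≤ ∑ T, moranP G 1 S₁ T * g T := by
    have := one_add_sum_moranP_one_mul_moranPsi_le G hdeg hx hy hxy
    simp only [g, hrec S₁ h0 h1, mul_sub, Finset.sum_sub_distrib]
    linarith
  have hmax' : g (insert y S₁) = g S₁ :=
    eq_of_forall_le_of_le_sum_mul (moranP_nonneg G zero_le_one S₁) (sum_moranP_one G hdeg S₁)
      hmax hsub ((by positivity : (0 : ℝ) < 1 / _).trans_le
        (inv_card_sq_le_moranP_one_insert G hx hxy))
  have := hcard (insert y S₁) (by simpa [hS₁] using hmax')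
  rw [Finset.card_insert_of_notMem hy] at this
  omega

end Moran

theorem stmt_14_general {V : Type*} [Fintype V] [DecidableEq V] (G : SimpleGraph V)
    [DecidableRel G.Adj] (hG : G.Connected) (hn : 2 ≤ Fintype.card V)
    (h : Finset V → ℝ)
    (habs0 : h ∅ = 0) (habs1 : h Finset.univ = 0)
    (hrec : ∀ S : Finset V, S ≠ ∅ → S ≠ Finset.univ →
      h S = 1 + ∑ T : Finset V, moranP G 1 S T * h T) :
    (1 / (Fintype.card V : ℝ)) * ∑ x : V, h {x} ≤
        (Fintype.card V : ℝ) ^ 4 *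
          (moranPhi G Finset.univ ^ 2 -
            (1 / (Fintype.card V : ℝ)) * ∑ x : V, ((G.degree x : ℝ))⁻¹ ^ 2) ∧
    (Fintype.card V : ℝ) ^ 4 *
        (moranPhi G Finset.univ ^ 2 -
          (1 / (Fintype.card V : ℝ)) * ∑ x : V, ((G.degree x : ℝ))⁻¹ ^ 2) ≤
      moranPhi G Finset.univ ^ 2 * (Fintype.card V : ℝ) ^ 4 ∧
    moranPhi G Finset.univ ^ 2 * (Fintype.card V : ℝ) ^ 4 ≤ (Fintype.card V : ℝ) ^ 6 := by
  have : Nontrivial V := Fintype.one_lt_card_iff_nontrivial.mp hn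
  have hmean : (1 / (Fintype.card V : ℝ)) * ∑ x : V, h {x} ≤
      (1 / (Fintype.card V : ℝ)) * ((Fintype.card V : ℝ) ^ 4 *
        (moranPhi G Finset.univ ^ 2 - ∑ x : V, ((G.degree x : ℝ))⁻¹ ^ 2)) := by
    rw [← sum_moranPsi_singleton]
    gcongr with x
    exact le_moranPsi G hG.preconnected h habs0 habs1 hrec {x}
  have hφ := moranPhi_nonneg G Finset.univ
  have hφn := moranPhi_univ_le_card G
  have hn₁ : (1 : ℝ) ≤ Fintype.card V := by exact_mod_cast Fintype.card_pos
  set n : ℝ := (Fintype.card V : ℝ)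
  set φ := moranPhi G Finset.univ
  set φ₀ := ∑ x : V, ((G.degree x : ℝ))⁻¹ ^ 2
  refine ⟨hmean.trans ?_, ?_, ?_⟩
  · have hpow : n ^ 3 ≤ n ^ 4 := pow_le_pow_right₀ hn₁ (by norm_num)
    calc 1 / n * (n ^ 4 * (φ ^ 2 - φ₀)) = n ^ 3 * φ ^ 2 - n ^ 4 * (1 / n * φ₀) := by field_simp
      _ ≤ n ^ 4 * (φ ^ 2 - 1 / n * φ₀) := by rw [mul_sub]; gcongr
  · have : 0 ≤ n ^ 4 * (1 / n * φ₀) := by positivity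
    linarith
  · calc φ ^ 2 * n ^ 4 ≤ n ^ 2 * n ^ 4 := by gcongr
      _ = n ^ 6 := by ring

/-- For a finite connected graph on `n ≥ 2` vertices, the expected absorption time of the
neutral (`r = 1`) Moran process with a uniformly random initial mutant is at most
`n⁴·(φ(G)² - φ'₀)`, where `φ(G) = ∑_{x ∈ V} 1/deg x` and `φ'₀ = (1/n)·∑_{x ∈ V} (deg x)⁻²`;
in particular it is at most `φ(G)²·n⁴ ≤ n⁶`. -/
theorem stmt_14 {V : Type*} [Fintype V] [DecidableEq V] (G : SimpleGraph V)
    [DecidableRel G.Adj] (hG : G.Connected) (hn : 2 ≤ Fintype.card V)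
    (h : Finset V → ℝ) (hpos : ∀ S, 0 ≤ h S)
    (habs0 : h ∅ = 0) (habs1 : h Finset.univ = 0)
    (hrec : ∀ S : Finset V, S ≠ ∅ → S ≠ Finset.univ →
      h S = 1 + ∑ T : Finset V, moranP G 1 S T * h T) :
    (1 / (Fintype.card V : ℝ)) * ∑ x : V, h {x} ≤
        (Fintype.card V : ℝ) ^ 4 *
          (moranPhi G Finset.univ ^ 2 -
            (1 / (Fintype.card V : ℝ)) * ∑ x : V, ((G.degree x : ℝ))⁻¹ ^ 2) ∧
    (Fintype.card V : ℝ) ^ 4 *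
        (moranPhi G Finset.univ ^ 2 -
          (1 / (Fintype.card V : ℝ)) * ∑ x : V, ((G.degree x : ℝ))⁻¹ ^ 2) ≤
      moranPhi G Finset.univ ^ 2 * (Fintype.card V : ℝ) ^ 4 ∧
    moranPhi G Finset.univ ^ 2 * (Fintype.card V : ℝ) ^ 4 ≤ (Fintype.card V : ℝ) ^ 6 :=
  stmt_14_general G hG hn h habs0 habs1 hrec
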